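/- (Lemma 3(ii)) Let f,g,h,l be a permutation of 1,2,3,4 and let ρ be a pure density matrix on (ℂ^d)^{⊗4} that is separable under at least one bipartition of {1,2,3,4} (i.e. ρ = ρ_A ⊗ ρ_B, up to permutation of tensor factors, for some bipartition A|B into two nonempty complementary subsets) but entangled (not separable) under the bipartition fgh|l. Then for every k = 1,…,d²−1, ‖T_{fgh|l}‖_k ≤ 4√k·(d²−1)/d². -/

import Mathlib

open Matrix ComplexOrder

/-- The singular values of a real matrix `M`: square roots of eigenvalues of `Mᴴ * M`. -/
noncomputable def singVals {α β : Type*} [Fintype α] [Fintype β] [DecidableEq β]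
    (M : Matrix α β ℝ) : β → ℝ :=
  fun i => Real.sqrt ((Matrix.isHermitian_conjTranspose_mul_self M).eigenvalues i)

/-- The Ky Fan `k`-norm of a real matrix: the sum of its `k` largest singular values
(realized as the largest sum of singular values over index sets of size at most `k`). -/
noncomputable def kyFan {α β : Type*} [Fintype α] [Fintype β] [DecidableEq β]
    (k : ℕ) (M : Matrix α β ℝ) : ℝ :=
  (Finset.univ.powerset.filter (fun s : Finset β => s.card ≤ k)).sup'
    ⟨∅, by simp⟩ (fun s => ∑ i ∈ s, singVals M i)

/-- Separability of an `n`-partite state (indexed by `Fin n → Fin d`) under the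
bipartition `A | Aᶜ`: `ρ` is, up to the permutation of tensor factors, the tensor
product of a density matrix on the factors in `A` and one on the factors not in `A`. -/
def SepUnder {n d : ℕ} (ρ : Matrix (Fin n → Fin d) (Fin n → Fin d) ℂ)
    (A : Finset (Fin n)) : Prop :=
  ∃ (ρA : Matrix ({j // j ∈ A} → Fin d) ({j // j ∈ A} → Fin d) ℂ)
    (ρB : Matrix ({j // j ∉ A} → Fin d) ({j // j ∉ A} → Fin d) ℂ),
    ρA.PosSemidef ∧ ρA.trace = 1 ∧ ρB.PosSemidef ∧ ρB.trace = 1 ∧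
    ∀ v w, ρ v w = ρA (fun j => v j.1) (fun j => w j.1) * ρB (fun j => v j.1) (fun j => w j.1)

/-- The full `n`-body correlation tensor entry `t_{a 0, …, a (n-1)}` of `ρ`,
i.e. `tr (ρ · (λ_{a 0} ⊗ ⋯ ⊗ λ_{a (n-1)}))`. -/
noncomputable def corrFull {n d : ℕ} (lam : Fin (d ^ 2 - 1) → Matrix (Fin d) (Fin d) ℂ)
    (ρ : Matrix (Fin n → Fin d) (Fin n → Fin d) ℂ) (a : Fin n → Fin (d ^ 2 - 1)) : ℝ :=
  (Matrix.trace (ρ * Matrix.of (fun v w : Fin n → Fin d => ∏ j, lam (a j) (v j) (w j)))).re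

/-- The matricization `T_{fgh|l}` of the 4-body correlation tensor: rows indexed by
`(i_f, i_g, i_h)`, columns by `i_l`. -/
noncomputable def T3v1 {d : ℕ} (lam : Fin (d ^ 2 - 1) → Matrix (Fin d) (Fin d) ℂ)
    (ρ : Matrix (Fin 4 → Fin d) (Fin 4 → Fin d) ℂ) (f g h l : Fin 4) :
    Matrix (Fin (d ^ 2 - 1) × Fin (d ^ 2 - 1) × Fin (d ^ 2 - 1)) (Fin (d ^ 2 - 1)) ℝ :=
  Matrix.of fun r c => corrFull lam ρ
    (fun j => if j = f then r.1 else if j = g then r.2.1 else if j = h then r.2.2 else c)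

/-!
If `ρ` is a product `ρ_A ⊗ ρ_B` across some bipartition, every full correlation `t_a` factors
as `t_{a|A} · t_{a|Aᶜ}`, so `∑ₐ tₐ²` is the product of the corresponding sums for the two
factors. For a state `σ` on `m` parties, the identity and the tensors `λ_{a₁} ⊗ ⋯ ⊗ λ_{aₘ}` form
an orthogonal family for the Frobenius inner product, with squared norms `dᵐ` and `2ᵐ`; Bessel's
inequality and the purity bound `tr σ² ≤ 1` give `∑ₐ |tr (σ λ_a)|² ≤ 2ᵐ (1 - d⁻ᵐ)`. With
`y = 1/d` and `(1 - y)(1 - y³) ≤ (1 - y²)²`, the Frobenius norm of `T_{fgh|l}` is at most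
`4 (1 - 1/d²)`, and the Ky Fan `k`-norm is at most `√k` times the Frobenius norm.
-/

open scoped Kronecker

namespace Matrix

section

variable {ι l m n R : Type*} [Fintype ι]

def piKronecker [CommMonoid R] (M : ι → Matrix m n R) : Matrix (ι → m) (ι → n) R :=
  of fun v w => ∏ j, M j (v j) (w j)

theorem conjTranspose_piKronecker [CommSemiring R] [StarRing R] (M : ι → Matrix m n R) :
    (piKronecker M)ᴴ = piKronecker fun j => (M j)ᴴ := by
  ext v w
  simp [piKronecker, star_prod]

theorem IsHermitian.piKronecker {𝕜 : Type*} [RCLike 𝕜] {M : ι → Matrix m m 𝕜}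
    (hM : ∀ j, (M j).IsHermitian) : (piKronecker M).IsHermitian := by
  rw [IsHermitian, conjTranspose_piKronecker]
  exact congrArg _ (funext hM)

theorem piKronecker_eq_submatrix_kronecker [CommMonoid R] (p : ι → Prop) [DecidablePred p]
    [Fintype {j // p j}] [Fintype {j // ¬ p j}] (M : ι → Matrix m n R) :
    piKronecker M = (piKronecker (fun j : {j // p j} => M j) ⊗ₖ
      piKronecker (fun j : {j // ¬ p j} => M j)).submatrix
        (Equiv.piEquivPiSubtypeProd p fun _ => m) (Equiv.piEquivPiSubtypeProd p fun _ => n) := by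
  ext v w
  simp only [piKronecker, submatrix_apply, kroneckerMap_apply, of_apply,
    Equiv.piEquivPiSubtypeProd_apply]
  -- `convert` reconciles the given `Fintype` instances on the subtypes with the default ones
  convert (Fintype.prod_subtype_mul_prod_subtype p _).symm

theorem trace_submatrix_equiv [Fintype m] [Fintype n] [AddCommMonoid R] (A : Matrix m m R)
    (e : n ≃ m) : trace (A.submatrix e e) = trace A :=
  e.sum_comp fun i => A i i

variable [DecidableEq ι]

theorem piKronecker_mul_piKronecker [CommSemiring R] [Fintype m] (M : ι → Matrix l m R)
    (N : ι → Matrix m n R) :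
    piKronecker M * piKronecker N = piKronecker fun j => M j * N j := by
  ext v w
  simp only [piKronecker, mul_apply, of_apply, ← Finset.prod_mul_distrib]
  exact (Fintype.prod_sum fun j x => M j (v j) x * N j x (w j)).symm

theorem trace_piKronecker [CommSemiring R] [Fintype m] (M : ι → Matrix m m R) :
    trace (piKronecker M) = ∏ j, trace (M j) := by
  simp only [trace, diag, piKronecker, of_apply]
  exact (Fintype.prod_sum fun j x => M j x x).symm

theorem trace_piKronecker_eq_zero [CommSemiring R] [Fintype m] [Nonempty ι]
    {M : ι → Matrix m m R} (hM : ∀ j, (M j).trace = 0) : (piKronecker M).trace = 0 := by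
  rw [trace_piKronecker]
  exact Finset.prod_eq_zero (Finset.mem_univ (Classical.arbitrary ι)) (hM _)

theorem trace_conjTranspose_piKronecker_mul_piKronecker {κ : Type*} [CommSemiring R]
    [StarRing R] [Fintype m] [DecidableEq κ] {lam : κ → Matrix m m R} {c : R}
    (horth : ∀ i j, ((lam i)ᴴ * lam j).trace = if i = j then c else 0) (a b : ι → κ) :
    ((piKronecker fun j => lam (a j))ᴴ * piKronecker fun j => lam (b j)).trace
      = if a = b then c ^ Fintype.card ι else 0 := by
  rw [conjTranspose_piKronecker, piKronecker_mul_piKronecker, trace_piKronecker]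
  simp only [horth]
  split_ifs with hab
  · simp [hab]
  · obtain ⟨j, hj⟩ := Function.ne_iff.mp hab
    exact Finset.prod_eq_zero (Finset.mem_univ j) (if_neg hj)

theorem trace_mul_piKronecker_of_eq_mul [CommSemiring R] [Fintype m] (p : ι → Prop)
    [DecidablePred p] [Fintype {j // p j}] [Fintype {j // ¬ p j}]
    {ρ : Matrix (ι → m) (ι → m) R} {ρA : Matrix ({j // p j} → m) ({j // p j} → m) R}
    {ρB : Matrix ({j // ¬ p j} → m) ({j // ¬ p j} → m) R}
    (hρ : ∀ v w, ρ v w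
      = ρA (fun j => v j.1) (fun j => w j.1) * ρB (fun j => v j.1) (fun j => w j.1))
    (M : ι → Matrix m m R) :
    (ρ * piKronecker M).trace
      = (ρA * piKronecker fun j : {j // p j} => M j).trace
        * (ρB * piKronecker fun j : {j // ¬ p j} => M j).trace := by
  have hρ' : ρ = (ρA ⊗ₖ ρB).submatrix (Equiv.piEquivPiSubtypeProd p fun _ => m)
      (Equiv.piEquivPiSubtypeProd p fun _ => m) := by
    ext v w
    exact hρ v w
  rw [hρ', piKronecker_eq_submatrix_kronecker p M, submatrix_mul_equiv, trace_submatrix_equiv,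
    ← mul_kronecker_mul, trace_kronecker]

end

section

variable {𝕜 m n : Type*} [RCLike 𝕜] [Fintype m] [Fintype n]

def frobeniusVec (M : Matrix m n 𝕜) : EuclideanSpace 𝕜 (m × n) :=
  WithLp.toLp 2 fun p => M p.1 p.2

theorem inner_frobeniusVec (X Y : Matrix m n 𝕜) :
    inner 𝕜 X.frobeniusVec Y.frobeniusVec = (Xᴴ * Y).trace := by
  simp only [frobeniusVec, PiLp.inner_apply, RCLike.inner_apply, Fintype.sum_prod_type, trace,
    diag, mul_apply, conjTranspose_apply, RCLike.star_def]
  rw [Finset.sum_comm]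
  exact Finset.sum_congr rfl fun _ _ => Finset.sum_congr rfl fun _ _ => mul_comm _ _

/-- Bessel's inequality for the Frobenius inner product `⟪X, Y⟫ = tr (Xᴴ Y)`. -/
theorem sum_norm_trace_sq_div_le {κ : Type*} [Fintype κ] [DecidableEq κ]
    (B : κ → Matrix m n 𝕜) (c : κ → ℝ) (hc : ∀ i, 0 < c i)
    (hB : ∀ i j, ((B i)ᴴ * B j).trace = if i = j then (c i : 𝕜) else 0) (X : Matrix m n 𝕜) :
    ∑ i, ‖((B i)ᴴ * X).trace‖ ^ 2 / c i ≤ RCLike.re (Xᴴ * X).trace := by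
  set s : κ → ℝ := fun i => (√(c i))⁻¹
  have hs : ∀ i, s i ^ 2 = (c i)⁻¹ := fun i => by
    simp only [s, inv_pow, Real.sq_sqrt (hc i).le]
  have hv : Orthonormal 𝕜 fun i => (s i : 𝕜) • (B i).frobeniusVec := by
    rw [orthonormal_iff_ite]
    intro i j
    simp only [inner_smul_left, inner_smul_right, inner_frobeniusVec, hB, RCLike.conj_ofReal]
    split_ifs with hij
    · subst hij
      rw [← mul_assoc, ← RCLike.ofReal_mul, ← RCLike.ofReal_mul, ← sq, hs,
        inv_mul_cancel₀ (hc i).ne', RCLike.ofReal_one]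
    · simp
  have hbessel := hv.sum_inner_products_le (s := Finset.univ) (x := X.frobeniusVec)
  rw [← inner_self_eq_norm_sq (𝕜 := 𝕜), inner_frobeniusVec] at hbessel
  refine le_of_eq_of_le (Finset.sum_congr rfl fun i _ => ?_) hbessel
  rw [inner_smul_left, inner_frobeniusVec, norm_mul, RCLike.norm_conj, RCLike.norm_ofReal,
    abs_of_nonneg (by positivity), mul_pow, hs, inv_mul_eq_div]

variable [DecidableEq m]

theorem IsHermitian.trace_mul_self {A : Matrix m m 𝕜} (hA : A.IsHermitian) :
    (A * A).trace = ∑ i, ((hA.eigenvalues i ^ 2 : ℝ) : 𝕜) := by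
  conv_lhs => rw [hA.spectral_theorem, ← map_mul, Unitary.conjStarAlgAut_apply, trace_mul_cycle,
    Unitary.coe_star_mul_self, one_mul, diagonal_mul_diagonal, trace_diagonal]
  simp [sq]

theorem PosSemidef.re_trace_mul_self_le {A : Matrix m m 𝕜} (hA : A.PosSemidef) :
    RCLike.re (A * A).trace ≤ RCLike.re A.trace ^ 2 := by
  rw [hA.isHermitian.trace_mul_self, hA.isHermitian.trace_eq_sum_eigenvalues]
  simp only [map_sum, RCLike.ofReal_re]
  exact Finset.sum_sq_le_sq_sum_of_nonneg fun i _ => hA.eigenvalues_nonneg i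

end

end Matrix

theorem Fintype.sum_mul_sum_restrict {ι κ R : Type*} [Fintype ι] [DecidableEq ι] [Fintype κ]
    [CommSemiring R] (p : ι → Prop) [DecidablePred p] [Fintype {j // p j}]
    [Fintype {j // ¬ p j}] (φ : ({j // p j} → κ) → R) (ψ : ({j // ¬ p j} → κ) → R) :
    ∑ a : ι → κ, φ (fun j => a j) * ψ (fun j => a j) = (∑ b, φ b) * ∑ c, ψ c := by
  rw [Fintype.sum_equiv (Equiv.piEquivPiSubtypeProd p fun _ => κ)
    (fun a => φ (fun j => a j) * ψ (fun j => a j)) (fun q => φ q.1 * ψ q.2) fun _ => rfl,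
    Fintype.sum_prod_type, Finset.sum_mul_sum]

theorem sum_norm_trace_mul_piKronecker_sq_le {𝕜 ι κ m : Type*} [RCLike 𝕜] [Fintype ι]
    [DecidableEq ι] [Nonempty ι] [Fintype κ] [DecidableEq κ] [Fintype m] [DecidableEq m]
    [Nonempty m] (lam : κ → Matrix m m 𝕜) (hherm : ∀ i, (lam i).IsHermitian)
    (htr : ∀ i, (lam i).trace = 0) (horth : ∀ i j, (lam i * lam j).trace = if i = j then 2 else 0)
    (ρ : Matrix (ι → m) (ι → m) 𝕜) (hρ : ρ.PosSemidef) (htrρ : ρ.trace = 1) :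
    ∑ a : ι → κ, ‖(ρ * piKronecker fun j => lam (a j)).trace‖ ^ 2
      ≤ 2 ^ Fintype.card ι * (1 - (Fintype.card m : ℝ)⁻¹ ^ Fintype.card ι) := by
  set N := Fintype.card ι
  let B : Option (ι → κ) → Matrix (ι → m) (ι → m) 𝕜 :=
    fun o => o.elim 1 fun a => piKronecker fun j => lam (a j)
  let c : Option (ι → κ) → ℝ := fun o => o.elim ((Fintype.card m : ℝ) ^ N) fun _ => 2 ^ N
  have hc : ∀ o, 0 < c o := by
    rintro (_ | _) <;> (simp only [c, Option.elim]; positivity)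
  have hB : ∀ o o', ((B o)ᴴ * B o').trace = if o = o' then (c o : 𝕜) else 0 := by
    have horth' : ∀ i j, ((lam i)ᴴ * lam j).trace = if i = j then (2 : 𝕜) else 0 := fun i j => by
      rw [(hherm i).eq, horth]
    rintro (_ | a) (_ | b)
    · simp [B, c, N]
    · simpa [B] using trace_piKronecker_eq_zero fun j => htr (b j)
    · simpa [B, (IsHermitian.piKronecker fun j => hherm (a j)).eq]
        using trace_piKronecker_eq_zero fun j => htr (a j)
    · simp only [B, c, Option.elim, Option.some.injEq, RCLike.ofReal_pow, RCLike.ofReal_ofNat]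
      exact trace_conjTranspose_piKronecker_mul_piKronecker horth' a b
  have hbessel := sum_norm_trace_sq_div_le B c hc hB ρ
  have hnone : ‖((B none)ᴴ * ρ).trace‖ ^ 2 / c none = ((Fintype.card m : ℝ) ^ N)⁻¹ := by
    simp [B, c, htrρ]
  have hsome : ∀ a : ι → κ, ‖((B (some a))ᴴ * ρ).trace‖ ^ 2 / c (some a)
      = ‖(ρ * piKronecker fun j => lam (a j)).trace‖ ^ 2 / 2 ^ N := fun a => by
    simp only [B, c, Option.elim, (IsHermitian.piKronecker fun j => hherm (a j)).eq,
      trace_mul_comm (piKronecker _) ρ]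
  have hpurity : RCLike.re (ρᴴ * ρ).trace ≤ 1 := by
    simpa [hρ.isHermitian.eq, htrρ] using hρ.re_trace_mul_self_le
  rw [Fintype.sum_option, hnone, Finset.sum_congr rfl fun a _ => hsome a, ← Finset.sum_div]
    at hbessel
  rw [inv_pow, ← div_le_iff₀' (by positivity)]
  linarith

section Correlation

variable {n d : ℕ} (lam : Fin (d ^ 2 - 1) → Matrix (Fin d) (Fin d) ℂ)

theorem corrFull_sq_le (ρ : Matrix (Fin n → Fin d) (Fin n → Fin d) ℂ)
    (a : Fin n → Fin (d ^ 2 - 1)) :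
    corrFull lam ρ a ^ 2 ≤ ‖(ρ * piKronecker fun j => lam (a j)).trace‖ ^ 2 := by
  rw [← sq_abs]
  exact pow_le_pow_left₀ (abs_nonneg _) (Complex.abs_re_le_norm _) 2

theorem SepUnder.sum_corrFull_sq_le (hd : 0 < d) (hherm : ∀ i, (lam i).IsHermitian)
    (htr : ∀ i, (lam i).trace = 0)
    (horth : ∀ i j, (lam i * lam j).trace = if i = j then 2 else 0)
    {ρ : Matrix (Fin n → Fin d) (Fin n → Fin d) ℂ} {A : Finset (Fin n)} (hA : A.Nonempty)
    (hAc : A ≠ Finset.univ) (hsep : SepUnder ρ A) :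
    ∑ a, corrFull lam ρ a ^ 2
      ≤ 2 ^ n * ((1 - (d : ℝ)⁻¹ ^ A.card) * (1 - (d : ℝ)⁻¹ ^ (n - A.card))) := by
  obtain ⟨ρA, ρB, hApsd, hAtr, hBpsd, hBtr, hρ⟩ := hsep
  have : Nonempty {j // j ∈ A} := hA.to_subtype
  have : Nonempty {j // j ∉ A} := by simpa [Finset.eq_univ_iff_forall] using hAc
  have : Nonempty (Fin d) := Fin.pos_iff_nonempty.mp hd
  have hd₁ : (d : ℝ)⁻¹ ≤ 1 := inv_le_one_of_one_le₀ (by exact_mod_cast hd)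
  have hBesselA := sum_norm_trace_mul_piKronecker_sq_le lam hherm htr horth ρA hApsd hAtr
  have hBesselB := sum_norm_trace_mul_piKronecker_sq_le lam hherm htr horth ρB hBpsd hBtr
  rw [Fintype.card_coe, Fintype.card_fin] at hBesselA
  rw [Fintype.card_subtype_compl, Fintype.card_coe, Fintype.card_fin, Fintype.card_fin]
    at hBesselB
  calc ∑ a, corrFull lam ρ a ^ 2
      ≤ ∑ a : Fin n → Fin (d ^ 2 - 1),
          ‖(ρA * piKronecker fun j : {j // j ∈ A} => lam (a j)).trace‖ ^ 2
            * ‖(ρB * piKronecker fun j : {j // j ∉ A} => lam (a j)).trace‖ ^ 2 := by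
        refine Finset.sum_le_sum fun a _ => (corrFull_sq_le lam ρ a).trans_eq ?_
        rw [trace_mul_piKronecker_of_eq_mul (· ∈ A) hρ, norm_mul, mul_pow]
    _ = (∑ b : {j // j ∈ A} → Fin (d ^ 2 - 1),
          ‖(ρA * piKronecker fun j => lam (b j)).trace‖ ^ 2)
        * ∑ c : {j // j ∉ A} → Fin (d ^ 2 - 1),
          ‖(ρB * piKronecker fun j => lam (c j)).trace‖ ^ 2 :=
        Fintype.sum_mul_sum_restrict (· ∈ A)
          (fun b => ‖(ρA * piKronecker fun j => lam (b j)).trace‖ ^ 2)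
          (fun c => ‖(ρB * piKronecker fun j => lam (c j)).trace‖ ^ 2)
    _ ≤ (2 ^ A.card * (1 - (d : ℝ)⁻¹ ^ A.card))
        * (2 ^ (n - A.card) * (1 - (d : ℝ)⁻¹ ^ (n - A.card))) :=
        mul_le_mul hBesselA hBesselB (by positivity)
          (mul_nonneg (by positivity) (sub_nonneg.mpr (pow_le_one₀ (by positivity) hd₁)))
    _ = 2 ^ n * ((1 - (d : ℝ)⁻¹ ^ A.card) * (1 - (d : ℝ)⁻¹ ^ (n - A.card))) := by
        rw [mul_mul_mul_comm, ← pow_add, Nat.add_sub_cancel' (A.card_le_univ.trans_eq (by simp))]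

end Correlation

theorem kyFan_le_sqrt_mul_sqrt_sum_sq {α β : Type*} [Fintype α] [Fintype β] [DecidableEq β]
    (k : ℕ) (M : Matrix α β ℝ) : kyFan k M ≤ √k * √(∑ i, ∑ j, M i j ^ 2) := by
  have hσ : ∑ j, singVals M j ^ 2 = ∑ i, ∑ j, M i j ^ 2 := by
    simp only [singVals, Real.sq_sqrt (eigenvalues_conjTranspose_mul_self_nonneg M _)]
    have htrace := (isHermitian_conjTranspose_mul_self M).trace_eq_sum_eigenvalues
    simp only [RCLike.ofReal_real_eq_id, id] at htrace
    rw [← htrace, trace, Finset.sum_comm]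
    simp [mul_apply, sq]
  refine Finset.sup'_le _ _ fun s hs => le_of_abs_le (Real.abs_le_sqrt ?_) |>.trans_eq
    (Real.sqrt_mul (Nat.cast_nonneg k) _)
  calc (∑ j ∈ s, singVals M j) ^ 2 ≤ s.card * ∑ j ∈ s, singVals M j ^ 2 :=
        sq_sum_le_card_mul_sum_sq
    _ ≤ k * ∑ j, singVals M j ^ 2 := by
        gcongr
        · exact_mod_cast (Finset.mem_filter.mp hs).2
        · exact Finset.subset_univ s
    _ = k * ∑ i, ∑ j, M i j ^ 2 := by rw [hσ]

section Matricization

variable {f g h l : Fin 4}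

theorem pairwise_ne_of_insert_eq_univ (hperm : ({f, g, h, l} : Finset (Fin 4)) = Finset.univ) :
    f ≠ g ∧ f ≠ h ∧ f ≠ l ∧ g ≠ h ∧ g ≠ l ∧ h ≠ l := by
  revert f g h l
  decide

def matricizeEquiv (κ : Type*) (hperm : ({f, g, h, l} : Finset (Fin 4)) = Finset.univ) :
    (Fin 4 → κ) ≃ (κ × κ × κ) × κ where
  toFun a := ((a f, a g, a h), a l)
  invFun rc j := if j = f then rc.1.1 else if j = g then rc.1.2.1 else if j = h then rc.1.2.2
    else rc.2
  left_inv a := by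
    obtain ⟨hfg, hfh, hfl, hgh, hgl, hhl⟩ := pairwise_ne_of_insert_eq_univ hperm
    funext j
    have hj : j ∈ ({f, g, h, l} : Finset (Fin 4)) := hperm ▸ Finset.mem_univ j
    simp only [Finset.mem_insert, Finset.mem_singleton] at hj
    rcases hj with rfl | rfl | rfl | rfl <;> simp [*, Ne.symm]
  right_inv := by
    obtain ⟨hfg, hfh, hfl, hgh, hgl, hhl⟩ := pairwise_ne_of_insert_eq_univ hperm
    rintro ⟨⟨r₁, r₂, r₃⟩, c⟩
    simp [Ne.symm hfg, Ne.symm hfh, Ne.symm hfl, Ne.symm hgh, Ne.symm hgl, Ne.symm hhl]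

theorem sum_sq_T3v1 {d : ℕ} (lam : Fin (d ^ 2 - 1) → Matrix (Fin d) (Fin d) ℂ)
    (ρ : Matrix (Fin 4 → Fin d) (Fin 4 → Fin d) ℂ)
    (hperm : ({f, g, h, l} : Finset (Fin 4)) = Finset.univ) :
    ∑ r, ∑ c, T3v1 lam ρ f g h l r c ^ 2 = ∑ a, corrFull lam ρ a ^ 2 := by
  rw [← Fintype.sum_prod_type']
  exact Fintype.sum_equiv (matricizeEquiv _ hperm).symm _ _ fun _ => rfl

end Matricization

theorem one_sub_pow_mul_one_sub_pow_le {y : ℝ} (hy : 0 ≤ y) {a : ℕ} (ha₁ : 1 ≤ a)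
    (ha₃ : a ≤ 3) : (1 - y ^ a) * (1 - y ^ (4 - a)) ≤ (1 - y ^ 2) ^ 2 := by
  have key : 0 ≤ y * (1 - y) ^ 2 := by positivity
  interval_cases a
  · norm_num; linarith
  · exact (sq _).ge
  · norm_num; linarith

theorem kyFan_T3v1_of_entangled_general (d : ℕ) (hd : 2 ≤ d)
    (lam : Fin (d ^ 2 - 1) → Matrix (Fin d) (Fin d) ℂ)
    (hherm : ∀ i, (lam i).IsHermitian)
    (htr : ∀ i, (lam i).trace = 0)
    (horth : ∀ i j, (lam i * lam j).trace = if i = j then 2 else 0)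
    (f g h l : Fin 4) (hperm : ({f, g, h, l} : Finset (Fin 4)) = Finset.univ)
    (ρ : Matrix (Fin 4 → Fin d) (Fin 4 → Fin d) ℂ)
    (hsome : ∃ A : Finset (Fin 4), A.Nonempty ∧ A ≠ Finset.univ ∧ SepUnder ρ A)
    (k : ℕ) :
    kyFan k (T3v1 lam ρ f g h l)
      ≤ 4 * Real.sqrt k * ((d : ℝ) ^ 2 - 1) / (d : ℝ) ^ 2 := by
  obtain ⟨A, hA, hAc, hsep⟩ := hsome
  have hA₃ : A.card ≤ 3 := Nat.le_of_lt_succ <| by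
    simpa using Finset.card_lt_card (Finset.ssubset_univ_iff.mpr hAc)
  have hy₀ : (0 : ℝ) ≤ (d : ℝ)⁻¹ := by positivity
  have hy₁ : (d : ℝ)⁻¹ ≤ 1 := inv_le_one_of_one_le₀ (by exact_mod_cast (by omega : 1 ≤ d))
  have hfrob : ∑ r, ∑ c, T3v1 lam ρ f g h l r c ^ 2 ≤ (4 * (1 - (d : ℝ)⁻¹ ^ 2)) ^ 2 := by
    rw [sum_sq_T3v1 lam ρ hperm, mul_pow, show (4 : ℝ) ^ 2 = 2 ^ 4 by norm_num]
    exact (hsep.sum_corrFull_sq_le lam (by omega) hherm htr horth hA hAc).trans <|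
      mul_le_mul_of_nonneg_left
        (one_sub_pow_mul_one_sub_pow_le hy₀ (Finset.card_pos.mpr hA) hA₃) (by positivity)
  calc kyFan k (T3v1 lam ρ f g h l) ≤ √k * √(∑ r, ∑ c, T3v1 lam ρ f g h l r c ^ 2) :=
        kyFan_le_sqrt_mul_sqrt_sum_sq k _
    _ ≤ √k * (4 * (1 - (d : ℝ)⁻¹ ^ 2)) := by
        gcongr
        exact (Real.sqrt_le_sqrt hfrob).trans_eq (Real.sqrt_sq (by nlinarith))
    _ = 4 * √k * ((d : ℝ) ^ 2 - 1) / (d : ℝ) ^ 2 := by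
        field_simp

/-- (Lemma 3(ii)) If a pure four-partite state is separable under at least one bipartition
but entangled under the bipartition `fgh|l`, then `‖T_{fgh|l}‖_k ≤ 4√k(d²-1)/d²`. -/
theorem kyFan_T3v1_of_entangled (d : ℕ) (hd : 2 ≤ d)
    (lam : Fin (d ^ 2 - 1) → Matrix (Fin d) (Fin d) ℂ)
    (hherm : ∀ i, (lam i).IsHermitian)
    (htr : ∀ i, (lam i).trace = 0)
    (horth : ∀ i j, (lam i * lam j).trace = if i = j then 2 else 0)
    (f g h l : Fin 4) (hperm : ({f, g, h, l} : Finset (Fin 4)) = Finset.univ)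
    (ρ : Matrix (Fin 4 → Fin d) (Fin 4 → Fin d) ℂ)
    (hpsd : ρ.PosSemidef) (htrρ : ρ.trace = 1) (hpure : ρ * ρ = ρ)
    (hsome : ∃ A : Finset (Fin 4), A.Nonempty ∧ A ≠ Finset.univ ∧ SepUnder ρ A)
    (hent : ¬ SepUnder ρ {f, g, h})
    (k : ℕ) (hk1 : 1 ≤ k) (hk2 : k ≤ d ^ 2 - 1) :
    kyFan k (T3v1 lam ρ f g h l)
      ≤ 4 * Real.sqrt k * ((d : ℝ) ^ 2 - 1) / (d : ℝ) ^ 2 :=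
  kyFan_T3v1_of_entangled_general d hd lam hherm htr horth f g h l hperm ρ hsome k
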